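/- For α, β, p, q > 0, the BFW density g(x) = (Γ(p+q)/(Γ(p)Γ(q)))·(α + β/x²)·exp(αx - β/x)·exp(-q·exp(αx - β/x))·(1 - exp(-exp(αx - β/x)))^{p-1} integrates to 1 over (0, ∞). -/

import Mathlib

/-!
Substituting `t = exp (-exp (α x - β / x))` turns the integrand into `Γ(p+q)/(Γ(p)Γ(q))` times the
Beta kernel `t ^ (q - 1) * (1 - t) ^ (p - 1)`: the map `x ↦ α x - β / x` is an increasing bijection
of `(0, ∞)` onto `ℝ`, and `y ↦ exp (-exp y)` a decreasing bijection of `ℝ` onto `(0, 1)`.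
The Beta integral `∫₀¹ t ^ (q - 1) (1 - t) ^ (p - 1) dt = Γ(q)Γ(p)/Γ(p+q)` finishes the proof.
-/

open Real MeasureTheory Set

lemma integral_Ioo_rpow_mul_one_sub_rpow {u v : ℝ} (hu : 0 < u) (hv : 0 < v) :
    ∫ t in Ioo (0 : ℝ) 1, t ^ (u - 1) * (1 - t) ^ (v - 1) = ProbabilityTheory.beta u v := by
  have hcast : Complex.betaIntegral u v =
      ((∫ t in Ioo (0 : ℝ) 1, t ^ (u - 1) * (1 - t) ^ (v - 1) : ℝ) : ℂ) := by
    rw [← integral_Ioc_eq_integral_Ioo, ← intervalIntegral.integral_of_le zero_le_one,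
      ← intervalIntegral.integral_ofReal, Complex.betaIntegral]
    refine intervalIntegral.integral_congr fun t ht => ?_
    rw [uIcc_of_le zero_le_one] at ht
    push_cast
    rw [Complex.ofReal_cpow ht.1, Complex.ofReal_cpow (sub_nonneg.2 ht.2)]
    push_cast
    rfl
  rw [ProbabilityTheory.beta_eq_betaIntegralReal u v hu hv, hcast, Complex.ofReal_re]

lemma range_exp_neg_exp : range (fun y => exp (-exp y)) = Ioo 0 1 := by
  ext t
  constructor
  · rintro ⟨y, rfl⟩
    exact ⟨exp_pos _, exp_lt_one_iff.2 (neg_neg_iff_pos.2 (exp_pos y))⟩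
  · rintro ⟨ht0, ht1⟩
    have hlog : 0 < -log t := neg_pos.2 (log_neg ht0 ht1)
    exact ⟨log (-log t), by simp only [exp_log hlog, neg_neg, exp_log ht0]⟩

theorem integral_pullback_exp_neg_exp_eq_beta {s : Set ℝ} (hs : MeasurableSet s) {T T' : ℝ → ℝ}
    (hT : ∀ x ∈ s, HasDerivWithinAt T (T' x) s x) (hT' : ∀ x ∈ s, 0 ≤ T' x) (hinj : InjOn T s)
    (hsurj : T '' s = univ) {p q : ℝ} (hp : 0 < p) (hq : 0 < q) :
    ∫ x in s, T' x * exp (T x) * exp (-q * exp (T x)) * (1 - exp (-exp (T x))) ^ (p - 1) =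
      ProbabilityTheory.beta q p := by
  set g : ℝ → ℝ := fun y => exp (-exp y)
  have hderiv : ∀ x ∈ s,
      HasDerivWithinAt (g ∘ T) (exp (-exp (T x)) * -(exp (T x) * T' x)) s x :=
    fun x hx => ((hT x hx).exp.neg).exp
  have hinj' : InjOn (g ∘ T) s :=
    (exp_injective.comp (neg_injective.comp exp_injective)).injOn.comp hinj (mapsTo_univ _ _)
  have himage : (g ∘ T) '' s = Ioo 0 1 := by
    rw [image_comp, hsurj, image_univ, range_exp_neg_exp]
  rw [← integral_Ioo_rpow_mul_one_sub_rpow hq hp, ← himage,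
    integral_image_eq_integral_abs_deriv_smul hs hderiv hinj']
  refine setIntegral_congr_fun hs fun x hx => ?_
  have hexp : exp (-exp (T x)) * exp (-exp (T x)) ^ (q - 1) = exp (-q * exp (T x)) := by
    rw [← exp_mul, ← exp_add]
    ring_nf
  rw [smul_eq_mul, abs_mul, abs_neg, abs_of_pos (exp_pos _),
    abs_of_nonneg (mul_nonneg (exp_pos _).le (hT' x hx)), Function.comp_apply, ← hexp]
  ring

lemma hasDerivAt_mul_sub_div (α β : ℝ) {x : ℝ} (hx : x ≠ 0) :
    HasDerivAt (fun x => α * x - β / x) (α + β / x ^ 2) x := by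
  have h : HasDerivAt (fun y => α * y - β * y⁻¹) (α * 1 - β * -(x ^ 2)⁻¹) x :=
    ((hasDerivAt_id' x).const_mul α).sub ((hasDerivAt_inv hx).const_mul β)
  simp only [div_eq_mul_inv]
  convert h using 1
  ring

lemma strictMonoOn_mul_sub_div {α β : ℝ} (hα : 0 < α) (hβ : 0 ≤ β) :
    StrictMonoOn (fun x => α * x - β / x) (Ioi 0) := fun x hx y _ hxy => by
  have := div_le_div_of_nonneg_left hβ hx hxy.le
  dsimp only
  nlinarith

lemma image_mul_sub_div_Ioi {α β : ℝ} (hα : 0 < α) (hβ : 0 < β) :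
    (fun x => α * x - β / x) '' Ioi 0 = univ := by
  refine eq_univ_of_forall fun y => ?_
  -- the positive root of `α x ^ 2 - y x - β`
  set r := √(y ^ 2 + 4 * α * β)
  have hr : r ^ 2 = y ^ 2 + 4 * α * β := sq_sqrt (by positivity)
  have hyr : 0 < y + r := by
    have hy : y ^ 2 < r ^ 2 := by nlinarith [mul_pos hα hβ]
    linarith [(abs_lt_of_sq_lt_sq' hy (sqrt_nonneg _)).1]
  refine ⟨(y + r) / (2 * α), div_pos hyr (by positivity), ?_⟩
  field_simp
  nlinarith

theorem bfw_pdf_integral_eq_one (α β p q : ℝ) (hα : 0 < α) (hβ : 0 < β)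
    (hp : 0 < p) (hq : 0 < q) :
    ∫ x in Set.Ioi (0 : ℝ),
      Real.Gamma (p + q) / (Real.Gamma p * Real.Gamma q) *
        ((α + β / x ^ 2) * Real.exp (α * x - β / x) *
          Real.exp (-q * Real.exp (α * x - β / x)) *
          (1 - Real.exp (-Real.exp (α * x - β / x))) ^ (p - 1)) = 1 := by
  have hbeta := integral_pullback_exp_neg_exp_eq_beta measurableSet_Ioi
    (fun x hx => (hasDerivAt_mul_sub_div α β (ne_of_gt hx)).hasDerivWithinAt)
    (fun x _ => by positivity) (strictMonoOn_mul_sub_div hα hβ.le).injOn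
    (image_mul_sub_div_Ioi hα hβ) hp hq
  rw [integral_const_mul, hbeta, ProbabilityTheory.beta, add_comm q p]
  field_simp [(Gamma_pos_of_pos hp).ne', (Gamma_pos_of_pos hq).ne',
    (Gamma_pos_of_pos (add_pos hp hq)).ne']
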